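/- Fix integers m, n, N, β ≥ 1. Let v_1, …, v_N ∈ ℂ^{mn}, set C_i := vec^{−1}(v_i) ∈ ℂ^{n×m} and Y_{ij} := v_i v_j*, with induced product (A⋆B)_{ij} := tr((A⊗B) Y_{ij}*). Then for all A ∈ ℂ^{m×β} and B ∈ ℂ^{n×β} and all 1 ≤ i, j ≤ N, one has (AA* ⋆ BB*)_{ij} = tr( (B* C_j Ā) (B* C_i Ā)* ), i.e., AA* ⋆ BB* is the Gram matrix of the matrices B* C_i Ā ∈ ℂ^{β×β} with respect to the Frobenius inner product ⟨X, Z⟩ := tr(X Z*). -/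

import Mathlib

/-!
Since `Y_{ij}* = v_j v_i*`, the left side is the sesquilinear form `v_i* (AA* ⊗ BB*) v_j`.
With `v_k = vec C_k` and `(P ⊗ Q) vec X = vec (Q X Pᵀ)` this is the Frobenius product
`tr (C_i* BB* C_j (AA*)ᵀ)`, and `(AA*)ᵀ = Ā Aᵀ` turns it, by cyclicity of the trace,
into `tr ((B* C_j Ā) (B* C_i Ā)*)`.
-/

open Matrix Kronecker ComplexOrder

section

variable {R : Type*} [CommSemiring R] [StarRing R] {l m n : Type*} [Fintype m] [Fintype n]

theorem trace_mul_conjTranspose_vecMulVec (M : Matrix n n R) (x y : n → R) :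
    trace (M * (vecMulVec x (star y))ᴴ) = star x ⬝ᵥ (M *ᵥ y) := by
  rw [conjTranspose_vecMulVec, star_star, mul_vecMulVec, trace_vecMulVec, dotProduct_comm]

theorem trace_conjTranspose_mul_sandwich_eq_trace_mul_conjTranspose [Fintype l]
    (A : Matrix n l R) (B : Matrix m l R) (X Y : Matrix m n R) :
    trace (Xᴴ * (B * Bᴴ * Y * (A * Aᴴ)ᵀ))
      = trace ((Bᴴ * Y * A.map star) * (Bᴴ * X * A.map star)ᴴ) := by
  have hĀ : (A.map star)ᴴ = Aᵀ := by ext; simp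
  rw [transpose_mul, conjTranspose_transpose, conjTranspose_mul, conjTranspose_mul, hĀ,
    conjTranspose_conjTranspose]
  calc trace (Xᴴ * (B * Bᴴ * Y * (A.map star * Aᵀ)))
      = trace (B * (Bᴴ * Y * A.map star * (Aᵀ * Xᴴ))) := by
        rw [trace_mul_comm]; simp only [Matrix.mul_assoc]
    _ = trace (Bᴴ * Y * A.map star * (Aᵀ * (Xᴴ * B))) := by
        rw [trace_mul_comm]; simp only [Matrix.mul_assoc]

end

theorem star_prod_gram_identity_general (m n N β : ℕ)
    (v : Fin N → Fin m × Fin n → ℂ)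
    (C : Fin N → Matrix (Fin n) (Fin m) ℂ) (hC : ∀ i p q, C i p q = v i (q, p))
    (A : Matrix (Fin m) (Fin β) ℂ) (B : Matrix (Fin n) (Fin β) ℂ) (i j : Fin N) :
    Matrix.trace (((A * Aᴴ) ⊗ₖ (B * Bᴴ)) * (vecMulVec (v i) (star (v j)))ᴴ)
      = Matrix.trace ((Bᴴ * C j * A.map star) * (Bᴴ * C i * A.map star)ᴴ) := by
  have hv : v = fun k => vec (C k) := funext fun k => funext fun ⟨q, p⟩ => (hC k p q).symm
  subst hv
  rw [trace_mul_conjTranspose_vecMulVec, kronecker_mulVec_vec, star_vec_dotProduct_vec,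
    trace_conjTranspose_mul_sandwich_eq_trace_mul_conjTranspose]

/-- for the rank-one product `⋆` given by `Y_{ij} = v_i v_j*`,
`(AA* ⋆ BB*)_{ij} = tr((B* C_j Ā)(B* C_i Ā)*)`, i.e. `AA* ⋆ BB*` is the Gram
matrix of the matrices `B* C_i Ā` in the Frobenius inner product.  Here
`C_i = vec⁻¹(v_i)` and `Ā = A.map star` is the entrywise conjugate. -/
theorem star_prod_gram_identity (m n N β : ℕ)
    (hm : 1 ≤ m) (hn : 1 ≤ n) (hN : 1 ≤ N) (hβ : 1 ≤ β)
    (v : Fin N → Fin m × Fin n → ℂ)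
    (C : Fin N → Matrix (Fin n) (Fin m) ℂ) (hC : ∀ i p q, C i p q = v i (q, p))
    (A : Matrix (Fin m) (Fin β) ℂ) (B : Matrix (Fin n) (Fin β) ℂ) (i j : Fin N) :
    Matrix.trace (((A * Aᴴ) ⊗ₖ (B * Bᴴ)) * (vecMulVec (v i) (star (v j)))ᴴ)
      = Matrix.trace ((Bᴴ * C j * A.map star) * (Bᴴ * C i * A.map star)ᴴ) :=
  star_prod_gram_identity_general m n N β v C hC A B i j
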